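/- arXiv:1205.0344 — 2 statements merged into one kernel-verified Lean document; each statement's English description precedes it below -/
import Mathlib

section
/- For every positive integer n, T(n) equals the sum of T(r-1) taken over all positive divisors r of n, i.e. T(n) = Σ_{r | n} T(r-1). -/
/-- `f (a₁,…,a_k)` defined by `f(a₁) = a₁`, `f(a₁,…,a_{i+1}) = (f(a₁,…,a_i) + 1) · a_{i+1}`. -/
def f (l : List ℕ) : ℕ := l.foldl (fun acc a => (acc + 1) * a) 0

/-- `T n` is the number of nonempty finite sequences of positive integers with `f A = n`,
with the additional convention `T 0 = 1`. -/
noncomputable def T : ℕ → ℕ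
  | 0 => 1
  | n + 1 => Nat.card {l : List ℕ // l ≠ [] ∧ (∀ a ∈ l, 0 < a) ∧ f l = n + 1}

/-!
Admitting the empty sequence, with `f [] = 0`, makes `T n` the number of sequences of positive
integers with `f`-value `n` for every `n`, the convention `T 0 = 1` included. A sequence with
value `n ≠ 0` is nonempty; its last term `r` divides `n`, and the preceding terms form a sequence
with value `n / r - 1`. Hence `T n = ∑_{r ∣ n} T (n / r - 1)`, and `r ↦ n / r` permutes the
divisors of `n`.
-/

@[simp]
theorem f_nil : f [] = 0 := rfl

@[simp]
theorem f_append_singleton (l : List ℕ) (r : ℕ) : f (l ++ [r]) = (f l + 1) * r := by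
  simp [f, List.foldl_append]

def fFiber (n : ℕ) : Type := {l : List ℕ // (∀ a ∈ l, 0 < a) ∧ f l = n}

theorem eq_nil_of_f_eq_zero {l : List ℕ} (hpos : ∀ a ∈ l, 0 < a) (hf : f l = 0) : l = [] := by
  rcases l.eq_nil_or_concat' with rfl | ⟨L, b, rfl⟩
  · rfl
  · have hb : 0 < b := hpos b (by simp)
    simp only [f_append_singleton, Nat.mul_eq_zero] at hf
    omega

instance : Unique (fFiber 0) where
  default := ⟨[], by simp, rfl⟩
  uniq l := Subtype.ext (eq_nil_of_f_eq_zero l.2.1 l.2.2)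

theorem T_eq_card_fFiber (n : ℕ) : T n = Nat.card (fFiber n) := by
  cases n with
  | zero => simp [T]
  | succ n =>
    refine Nat.card_congr (Equiv.subtypeEquivRight fun l => ⟨fun h => h.2, fun h => ⟨?_, h⟩⟩)
    rintro rfl
    simp at h

theorem append_divisor_mem_fFiber {n r : ℕ} (hr : r ∈ n.divisors) {l : List ℕ}
    (hl : (∀ a ∈ l, 0 < a) ∧ f l = n / r - 1) : (∀ a ∈ l ++ [r], 0 < a) ∧ f (l ++ [r]) = n := by
  obtain ⟨hrn, hn⟩ := Nat.mem_divisors.mp hr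
  have hdiv : 0 < n / r :=
    Nat.div_pos (Nat.le_of_dvd (Nat.pos_of_ne_zero hn) hrn) (Nat.pos_of_mem_divisors hr)
  refine ⟨?_, ?_⟩
  · simpa [or_imp, forall_and] using ⟨hl.1, Nat.pos_of_mem_divisors hr⟩
  · rw [f_append_singleton, hl.2, Nat.sub_add_cancel hdiv, Nat.div_mul_cancel hrn]

def appendDivisor (n : ℕ) (x : Σ r : n.divisors, fFiber (n / r - 1)) : fFiber n :=
  ⟨x.2.1 ++ [x.1.1], append_divisor_mem_fFiber x.1.2 x.2.2⟩

theorem appendDivisor_injective (n : ℕ) : Function.Injective (appendDivisor n) := by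
  rintro ⟨⟨r₁, _⟩, l₁, _⟩ ⟨⟨r₂, _⟩, l₂, _⟩ h
  obtain ⟨rfl, hr⟩ := List.append_inj' (congrArg Subtype.val h) rfl
  cases List.singleton_inj.mp hr
  rfl

theorem appendDivisor_surjective {n : ℕ} (hn : n ≠ 0) :
    Function.Surjective (appendDivisor n) := by
  rintro ⟨l, hpos, hf⟩
  rcases l.eq_nil_or_concat' with rfl | ⟨L, r, rfl⟩
  · exact absurd hf.symm hn
  have hr : 0 < r := hpos r (by simp)
  rw [f_append_singleton] at hf
  have hrn : r ∈ n.divisors := Nat.mem_divisors.mpr ⟨Dvd.intro_left _ hf, hn⟩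
  have hL : f L = n / r - 1 := by
    rw [← hf, Nat.mul_div_cancel _ hr, Nat.add_sub_cancel]
  exact ⟨⟨⟨r, hrn⟩, L, fun a ha => hpos a (by simp [ha]), hL⟩, rfl⟩

theorem appendDivisor_bijective {n : ℕ} (hn : n ≠ 0) : Function.Bijective (appendDivisor n) :=
  ⟨appendDivisor_injective n, appendDivisor_surjective hn⟩

instance fFiber.finite (n : ℕ) : Finite (fFiber n) := by
  induction n using Nat.strong_induction_on with
  | _ n ih =>
    rcases eq_or_ne n 0 with rfl | hn
    · infer_instance
    have : ∀ r : n.divisors, Finite (fFiber (n / r - 1)) := fun r =>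
      ih _ (by have := Nat.div_le_self n r; omega)
    exact Finite.of_surjective _ (appendDivisor_surjective hn)

theorem card_fFiber {n : ℕ} (hn : n ≠ 0) :
    Nat.card (fFiber n) = ∑ r ∈ n.divisors, Nat.card (fFiber (n / r - 1)) := by
  rw [← Nat.card_eq_of_bijective _ (appendDivisor_bijective hn), Nat.card_sigma]
  exact Finset.sum_coe_sort n.divisors fun r => Nat.card (fFiber (n / r - 1))

theorem T_eq_sum_divisors (n : ℕ) (hn : 0 < n) :
    T n = ∑ r ∈ n.divisors, T (r - 1) := by
  simp only [T_eq_card_fFiber]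
  rw [card_fFiber hn.ne', ← Nat.sum_div_divisors n fun r => Nat.card (fFiber (r - 1))]
end

section
/- If n = p^r where p is a prime number and r ≥ 0, then T(n) = Σ_{k=0}^{r} T(p^k − 1). -/
lemma f_concat (l : List ℕ) (a : ℕ) : f (l ++ [a]) = (f l + 1) * a := by
  simp [f, List.foldl_append]

lemma f_pos {l : List ℕ} (h : l ≠ []) (hpos : ∀ a ∈ l, 0 < a) : 0 < f l := by
  induction l using List.reverseRecOn with
  | nil => simp at h
  | append_singleton l a ih =>
    rw [f_concat]
    exact Nat.mul_pos (Nat.succ_pos _) (hpos a (by simp))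

lemma f_ge {l : List ℕ} (hpos : ∀ a ∈ l, 0 < a) :
    l.length ≤ f l ∧ ∀ a ∈ l, a ≤ f l := by
  induction l using List.reverseRecOn with
  | nil => simp [f]
  | append_singleton l b ih =>
    have hb : 0 < b := hpos b (by simp)
    obtain ⟨h1, h2⟩ := ih (fun a ha => hpos a (by simp [ha]))
    have key : f l + 1 ≤ (f l + 1) * b := Nat.le_mul_of_pos_right _ hb
    refine ⟨?_, ?_⟩
    · rw [f_concat]; simp only [List.length_append, List.length_singleton]; omega
    · intro a ha
      rw [f_concat]
      rcases List.mem_append.1 ha with h | h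
      · have := h2 a h; omega
      · simp only [List.mem_singleton] at h; subst h
        calc a = 1 * a := (one_mul a).symm
        _ ≤ (f l + 1) * a := Nat.mul_le_mul_right _ (by omega)

lemma S_finite (n : ℕ) : {l : List ℕ | l ≠ [] ∧ (∀ a ∈ l, 0 < a) ∧ f l = n}.Finite := by
  have hsub : {l : List ℕ | l ≠ [] ∧ (∀ a ∈ l, 0 < a) ∧ f l = n} ⊆
      (List.map (Fin.val) '' {l : List (Fin (n+1)) | l.length ≤ n}) := by
    rintro l ⟨hne, hpos, hf⟩
    obtain ⟨h1, h2⟩ := f_ge hpos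
    refine ⟨l.attach.map (fun a => (⟨a.1, by have := h2 a.1 a.2; omega⟩ : Fin (n+1))), ?_, ?_⟩
    · simp only [Set.mem_setOf_eq, List.length_map, List.length_attach]; omega
    · simp [List.map_map, Function.comp]
  exact ((List.finite_length_le (Fin (n+1)) n).image _).subset hsub

lemma T_zero : T 0 = 1 := rfl

lemma T_eq {n : ℕ} (h : n ≠ 0) :
    T n = Nat.card {l : List ℕ // l ≠ [] ∧ (∀ a ∈ l, 0 < a) ∧ f l = n} := by
  obtain ⟨m, rfl⟩ := Nat.exists_eq_succ_of_ne_zero h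
  rfl

lemma f_eq_one {l : List ℕ} (hne : l ≠ []) (hpos : ∀ a ∈ l, 0 < a) (hf : f l = 1) :
    l = [1] := by
  rcases List.eq_nil_or_concat l with rfl | ⟨L, b, rfl⟩
  case _ => exact absurd rfl hne
  simp only [List.concat_eq_append] at hpos hf ⊢
  rw [f_concat] at hf
  have h1 : f L + 1 = 1 := Nat.eq_one_of_mul_eq_one_right hf
  have h2 : b = 1 := Nat.eq_one_of_mul_eq_one_left hf
  have hL : L = [] := by
    by_contra hL
    have := f_pos hL (fun a ha => hpos a (by simp [ha]))
    omega
  subst hL; subst h2; rfl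

lemma T_one : T 1 = 1 := by
  rw [T_eq one_ne_zero]
  rw [Nat.card_eq_one_iff_unique]
  constructor
  · constructor
    rintro ⟨l₁, h₁, h₁p, h₁f⟩ ⟨l₂, h₂, h₂p, h₂f⟩
    simp only [Subtype.mk_eq_mk]
    rw [f_eq_one h₁ h₁p h₁f, f_eq_one h₂ h₂p h₂f]
  · exact ⟨⟨[1], by simp, by simp, rfl⟩⟩

lemma step1 {p r : ℕ} (hp : 0 < p) {l : List ℕ} (hne : l ≠ []) (hpos : ∀ a ∈ l, 0 < a)
    (hf : f l = p ^ r) :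
    (l.dropLast ++ [p * l.getLast hne]) ≠ [] ∧
    (∀ a ∈ l.dropLast ++ [p * l.getLast hne], 0 < a) ∧
    f (l.dropLast ++ [p * l.getLast hne]) = p ^ (r + 1) := by
  have hd : l.dropLast ++ [l.getLast hne] = l := List.dropLast_concat_getLast hne
  have hg : 0 < l.getLast hne := hpos _ (List.getLast_mem hne)
  refine ⟨by simp, ?_, ?_⟩
  · intro a ha
    rcases List.mem_append.1 ha with h | h
    · exact hpos a (List.dropLast_subset l h)
    · simp only [List.mem_singleton] at h; subst h; positivity
  · rw [f_concat]
    have key : (f l.dropLast + 1) * l.getLast hne = p ^ r := by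
      rw [← f_concat, hd]; exact hf
    calc (f l.dropLast + 1) * (p * l.getLast hne)
        = ((f l.dropLast + 1) * l.getLast hne) * p := by ring
      _ = p ^ (r + 1) := by rw [key, pow_succ]

lemma step2 {n : ℕ} (hn : 0 < n) {l : List ℕ} (hne : l ≠ []) (hpos : ∀ a ∈ l, 0 < a)
    (hf : f l = n - 1) :
    (l ++ [1]) ≠ [] ∧ (∀ a ∈ l ++ [1], 0 < a) ∧ f (l ++ [1]) = n := by
  refine ⟨by simp, ?_, ?_⟩
  · intro a ha
    rcases List.mem_append.1 ha with h | h
    · exact hpos a h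
    · simp only [List.mem_singleton] at h; omega
  · rw [f_concat, mul_one, hf]; omega

lemma card_key (p r : ℕ) (hp : p.Prime) :
    Nat.card {l : List ℕ // l ≠ [] ∧ (∀ a ∈ l, 0 < a) ∧ f l = p ^ (r + 1)} =
    Nat.card {l : List ℕ // l ≠ [] ∧ (∀ a ∈ l, 0 < a) ∧ f l = p ^ r} +
    Nat.card {l : List ℕ // l ≠ [] ∧ (∀ a ∈ l, 0 < a) ∧ f l = p ^ (r + 1) - 1} := by
  have hp2 := hp.two_le
  have h1 : 1 < p ^ (r + 1) := Nat.one_lt_pow (Nat.succ_ne_zero r) (by omega)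
  haveI : Finite {l : List ℕ // l ≠ [] ∧ (∀ a ∈ l, 0 < a) ∧ f l = p ^ r} :=
    (S_finite (p ^ r)).to_subtype
  haveI : Finite {l : List ℕ // l ≠ [] ∧ (∀ a ∈ l, 0 < a) ∧ f l = p ^ (r + 1) - 1} :=
    (S_finite (p ^ (r + 1) - 1)).to_subtype
  rw [← Nat.card_sum]
  refine (Nat.card_eq_of_bijective
    (Sum.elim
      (fun b => ⟨b.1.dropLast ++ [p * b.1.getLast b.2.1],
        step1 hp.pos b.2.1 b.2.2.1 b.2.2.2⟩)
      (fun c => ⟨c.1 ++ [1], step2 (by omega) c.2.1 c.2.2.1 c.2.2.2⟩))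
    ⟨?_, ?_⟩).symm
  · -- injective
    rintro (⟨l₁, hne₁, hpos₁, hf₁⟩ | ⟨l₁, hne₁, hpos₁, hf₁⟩)
           (⟨l₂, hne₂, hpos₂, hf₂⟩ | ⟨l₂, hne₂, hpos₂, hf₂⟩) h <;>
      simp only [Sum.elim_inl, Sum.elim_inr, Subtype.mk_eq_mk] at h
    · obtain ⟨hd, hl⟩ := List.append_inj' h (by simp)
      simp only [List.cons.injEq, and_true] at hl
      have hg : l₁.getLast hne₁ = l₂.getLast hne₂ :=
        Nat.eq_of_mul_eq_mul_left hp.pos hl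
      congr 1
      apply Subtype.ext
      show l₁ = l₂
      calc l₁ = l₁.dropLast ++ [l₁.getLast hne₁] := (List.dropLast_concat_getLast hne₁).symm
        _ = l₂.dropLast ++ [l₂.getLast hne₂] := by rw [hd, hg]
        _ = l₂ := List.dropLast_concat_getLast hne₂
    · obtain ⟨-, hl⟩ := List.append_inj' h (by simp)
      simp only [List.cons.injEq, and_true] at hl
      have := Nat.eq_one_of_mul_eq_one_right hl
      omega
    · obtain ⟨-, hl⟩ := List.append_inj' h (by simp)
      simp only [List.cons.injEq, and_true] at hl
      have := Nat.eq_one_of_mul_eq_one_right hl.symm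
      omega
    · obtain ⟨hd, -⟩ := List.append_inj' h (by simp)
      congr 1
      exact Subtype.ext hd
  · -- surjective
    rintro ⟨l, hne, hpos, hf⟩
    have hd : l.dropLast ++ [l.getLast hne] = l := List.dropLast_concat_getLast hne
    have hg : 0 < l.getLast hne := hpos _ (List.getLast_mem hne)
    have hfc : (f l.dropLast + 1) * l.getLast hne = p ^ (r + 1) := by
      rw [← f_concat, hd]; exact hf
    by_cases hdvd : p ∣ l.getLast hne
    · obtain ⟨b, hb⟩ := hdvd
      have hbpos : 0 < b := by
        rcases Nat.eq_zero_or_pos b with h0 | h0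
        · rw [h0, mul_zero] at hb; omega
        · exact h0
      have hfb : (f l.dropLast + 1) * b = p ^ r := by
        have h' : p * ((f l.dropLast + 1) * b) = p * p ^ r := by
          rw [mul_comm p (p ^ r), ← pow_succ, ← hfc, hb]; ring
        exact Nat.eq_of_mul_eq_mul_left hp.pos h'
      have hmem : (l.dropLast ++ [b]) ≠ [] ∧ (∀ a ∈ l.dropLast ++ [b], 0 < a) ∧
          f (l.dropLast ++ [b]) = p ^ r := by
        refine ⟨by simp, ?_, by rw [f_concat]; exact hfb⟩
        intro a ha
        rcases List.mem_append.1 ha with h | h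
        · exact hpos a (List.dropLast_subset l h)
        · simp only [List.mem_singleton] at h; omega
      refine ⟨Sum.inl ⟨l.dropLast ++ [b], hmem⟩, ?_⟩
      simp only [Sum.elim_inl]
      apply Subtype.ext
      show (l.dropLast ++ [b]).dropLast ++ [p * (l.dropLast ++ [b]).getLast _] = l
      rw [List.dropLast_concat, List.getLast_concat, ← hb, hd]
    · have hco : Nat.Coprime (l.getLast hne) (p ^ (r + 1)) :=
        (Nat.Coprime.pow_left _ ((hp.coprime_iff_not_dvd).2 hdvd)).symm
      have hdvd' : l.getLast hne ∣ p ^ (r + 1) := ⟨f l.dropLast + 1, by rw [← hfc]; ring⟩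
      have hg1 : l.getLast hne = 1 := hco.eq_one_of_dvd hdvd'
      have hfl : f l.dropLast = p ^ (r + 1) - 1 := by rw [hg1, mul_one] at hfc; omega
      have hne' : l.dropLast ≠ [] := by
        intro h0
        rw [h0] at hfl
        have : f ([] : List ℕ) = 0 := rfl
        omega
      have hmem : l.dropLast ≠ [] ∧ (∀ a ∈ l.dropLast, 0 < a) ∧
          f l.dropLast = p ^ (r + 1) - 1 :=
        ⟨hne', fun a ha => hpos a (List.dropLast_subset l ha), hfl⟩
      refine ⟨Sum.inr ⟨l.dropLast, hmem⟩, ?_⟩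
      simp only [Sum.elim_inr]
      apply Subtype.ext
      show l.dropLast ++ [1] = l
      rw [← hg1, hd]

lemma T_key (p r : ℕ) (hp : p.Prime) :
    T (p ^ (r + 1)) = T (p ^ r) + T (p ^ (r + 1) - 1) := by
  have hp2 := hp.two_le
  have h1 : 1 < p ^ (r + 1) := Nat.one_lt_pow (Nat.succ_ne_zero r) (by omega)
  have hpr : p ^ r ≠ 0 := pow_ne_zero _ (by omega)
  rw [T_eq (by omega : p ^ (r + 1) ≠ 0), T_eq hpr, T_eq (by omega : p ^ (r + 1) - 1 ≠ 0)]
  exact card_key p r hp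

theorem T_prime_pow (p r : ℕ) (hp : p.Prime) :
    T (p ^ r) = ∑ k ∈ Finset.range (r + 1), T (p ^ k - 1) := by
  induction r with
  | zero => simp [T_one, T_zero]
  | succ n ih =>
    rw [Finset.sum_range_succ, ← ih, T_key p n hp]
end
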